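/- arXiv:0902.2154 — 4 statements merged into one kernel-verified Lean document; each statement's English description precedes it below -/
import Mathlib

section
/- Let $a, c > 0$, $\rho \in (-1,1)$ with $a \geq \rho c$, and let $t > 0$. Then for all $u \in [u_-, u_+]$ (where $u_\pm$ are the roots of $p(u) = (a-\rho c u)^2 + c^2(u-u^2)$), the function $f(u) = \cosh(\sqrt{p(u)}\, t/2) + (a - c\rho u)\frac{\sinh(\sqrt{p(u)}\, t/2)}{\sqrt{p(u)}}$ is strictly positive. (At points where $p(u)=0$, interpret $\sinh(x)/x$ as $1$.) -/
/-- `sinh x / x`, extended by `1` at `x = 0`. -/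
noncomputable def sinhc (x : ℝ) : ℝ := if x = 0 then 1 else Real.sinh x / x

lemma sinhc_nonneg {x : ℝ} (hx : 0 ≤ x) : 0 ≤ sinhc x := by
  unfold sinhc
  split
  · norm_num
  · have hx' : 0 < x := lt_of_le_of_ne hx (Ne.symm (by assumption))
    exact le_of_lt (div_pos (by positivity) hx')

lemma root_nonneg (a c ρ r : ℝ) (ha : 0 < a) (hc : 0 < c) (hρ1 : -1 < ρ) (hρ2 : ρ < 1)
    (hac : ρ * c ≤ a) (hr : (a - ρ * c * r) ^ 2 + c ^ 2 * (r - r ^ 2) = 0) :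
    0 ≤ a - c * ρ * r := by
  by_contra h
  push_neg at h
  have hD : 0 < ρ * c * r - a := by linarith
  rcases le_or_gt r 0 with hr0 | hr0
  · have hrneg : r < 0 := by
      rcases lt_or_eq_of_le hr0 with h' | h'
      · exact h'
      · exfalso; rw [← h'] at hD; nlinarith
    have hρneg : ρ < 0 := by
      by_contra h'
      push_neg at h'
      have : ρ * c * r ≤ 0 :=
        mul_nonpos_of_nonneg_of_nonpos (mul_nonneg h' hc.le) hrneg.le
      linarith
    have hcr : c * r < 0 := mul_neg_of_pos_of_neg hc hrneg
    have h3 : ρ * c * r - a < -(c * r) := by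
      nlinarith [mul_neg_of_pos_of_neg (by linarith : (0:ℝ) < ρ + 1) hcr]
    have h4 : (ρ * c * r - a) * (ρ * c * r - a) < (-(c * r)) * (-(c * r)) :=
      mul_self_lt_mul_self (le_of_lt hD) h3
    nlinarith [mul_pos (mul_pos hc hc) (neg_pos.2 hrneg)]
  · have hρpos : 0 < ρ := by
      by_contra h'
      push_neg at h'
      have : ρ * c * r ≤ 0 :=
        mul_nonpos_of_nonpos_of_nonneg (mul_nonpos_of_nonpos_of_nonneg h' hc.le) hr0.le
      linarith
    have hr1 : 1 < r := by nlinarith [mul_pos (mul_pos hρpos hc) hr0]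
    have h3 : ρ * c * r - a < c * (r - 1) := by nlinarith
    have h4 : (ρ * c * r - a) * (ρ * c * r - a) < (c * (r - 1)) * (c * (r - 1)) :=
      mul_self_lt_mul_self (le_of_lt hD) h3
    nlinarith [mul_pos (mul_pos hc hc) (by linarith : (0:ℝ) < r - 1)]

/-- If `a ≥ ρc` and `t > 0`, the function
`f(u) = cosh(√p(u)·t/2) + (a - cρu)·sinh(√p(u)·t/2)/√p(u)` is strictly positive
on `[u₋, u₊]`, the interval between the roots of the Heston quadratic `p`.
(Since `sinh(P t/2)/P = (t/2)·sinh(P t/2)/(P t/2)`, we express it through `sinhc`.) -/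
theorem stmt_4 (a c ρ t : ℝ) (ha : 0 < a) (hc : 0 < c) (hρ : ρ ∈ Set.Ioo (-1 : ℝ) 1)
    (hac : ρ * c ≤ a) (ht : 0 < t)
    (p : ℝ → ℝ) (hp : ∀ u, p u = (a - ρ * c * u) ^ 2 + c ^ 2 * (u - u ^ 2))
    (um up : ℝ) (hum : um < 0) (hup : 0 < up) (hpum : p um = 0) (hpup : p up = 0)
    (f : ℝ → ℝ)
    (hf : ∀ u, f u = Real.cosh (Real.sqrt (p u) * t / 2) +
      (a - c * ρ * u) * (t / 2) * sinhc (Real.sqrt (p u) * t / 2)) :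
    ∀ u ∈ Set.Icc um up, 0 < f u := by
  obtain ⟨hρ1, hρ2⟩ := hρ
  have h1 : 0 ≤ a - c * ρ * um :=
    root_nonneg a c ρ um ha hc hρ1 hρ2 hac (by rw [hp um] at hpum; linarith)
  have h2 : 0 ≤ a - c * ρ * up :=
    root_nonneg a c ρ up ha hc hρ1 hρ2 hac (by rw [hp up] at hpup; linarith)
  intro u hu
  obtain ⟨hu1, hu2⟩ := hu
  have hlt : um < up := lt_trans hum hup
  have hmid : 0 ≤ a - c * ρ * u := by
    nlinarith [mul_nonneg (sub_nonneg.2 hu2) h1, mul_nonneg (sub_nonneg.2 hu1) h2]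
  rw [hf u]
  have hx : 0 ≤ Real.sqrt (p u) * t / 2 := by positivity
  have hcosh : 1 ≤ Real.cosh (Real.sqrt (p u) * t / 2) := Real.one_le_cosh _
  have hterm : 0 ≤ (a - c * ρ * u) * (t / 2) * sinhc (Real.sqrt (p u) * t / 2) :=
    mul_nonneg (mul_nonneg hmid (by linarith)) (sinhc_nonneg hx)
  linarith
end

section
/- Let $a, c, t > 0$, $\rho \in (0,1)$ with $a < c\rho$, and suppose $t \geq t_0 := 2/(c\rho u_+ - a)$, where $u_+ > 1$ is the largest root of $p(u) = (a-\rho c u)^2 + c^2(u-u^2)$ and $c\rho u_+ - a > 0$. Then the function $f(u) = \cosh(\sqrt{p(u)}\,t/2) + (a - c\rho u)\frac{\sinh(\sqrt{p(u)}\,t/2)}{\sqrt{p(u)}}$ (extended by continuity where $p(u)=0$) satisfies $f(1) > 0$ and $\lim_{u \nearrow u_+} f(u) = 1 + (a - c\rho u_+)t/2 \leq 0$; hence $f$ has a zero in $(1, u_+]$. -/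
open Filter Set

lemma continuous_sinhc : Continuous sinhc := by
  rw [continuous_iff_continuousAt]
  intro x
  rcases eq_or_ne x 0 with rfl | hx
  · have hd : HasDerivAt Real.sinh 1 0 := by simpa using Real.hasDerivAt_sinh 0
    rw [hasDerivAt_iff_tendsto_slope] at hd
    have h1 : Tendsto sinhc (nhdsWithin 0 {(0:ℝ)}ᶜ) (nhds 1) := by
      refine hd.congr' ?_
      filter_upwards [self_mem_nhdsWithin] with y hy
      have hy' : y ≠ 0 := hy
      simp [sinhc, hy', slope_def_field, div_eq_inv_mul]
    have h2 : Tendsto sinhc (pure (0:ℝ)) (nhds 1) := by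
      simpa [sinhc] using tendsto_pure_nhds sinhc 0 |>.congr (fun _ => rfl) |>.mono_right
        (le_refl _)
    unfold ContinuousAt
    have h0 : sinhc 0 = 1 := by simp [sinhc]
    rw [h0, ← nhdsNE_sup_pure]
    exact h1.sup h2
  · have : ContinuousAt (fun y => Real.sinh y / y) x :=
      Real.continuous_sinh.continuousAt.div continuousAt_id hx
    refine this.congr ?_
    filter_upwards [isOpen_compl_singleton.mem_nhds hx] with y hy
    have hy' : y ≠ 0 := hy
    simp [sinhc, hy']

/-- Case `a < cρ`, `t ≥ t₀ = 2/(cρu₊ - a)`: the discriminant function `f`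
satisfies `f(1) > 0`, tends to `1 + (a - cρu₊)t/2 ≤ 0` as `u ↗ u₊`, and hence
has a zero in `(1, u₊]`. -/
theorem stmt_5 (a c ρ t : ℝ) (ha : 0 < a) (hc : 0 < c) (hρ : ρ ∈ Set.Ioo (0 : ℝ) 1)
    (hac : a < c * ρ) (ht : 0 < t)
    (p : ℝ → ℝ) (hp : ∀ u, p u = (a - ρ * c * u) ^ 2 + c ^ 2 * (u - u ^ 2))
    (up : ℝ) (hup : 1 < up) (hpup : p up = 0)
    (hlargest : ∀ u : ℝ, p u = 0 → u ≤ up)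
    (hden : 0 < c * ρ * up - a)
    (ht0 : 2 / (c * ρ * up - a) ≤ t)
    (f : ℝ → ℝ)
    (hf : ∀ u, f u = Real.cosh (Real.sqrt (p u) * t / 2) +
      (a - c * ρ * u) * (t / 2) * sinhc (Real.sqrt (p u) * t / 2)) :
    0 < f 1 ∧
    Tendsto f (nhdsWithin up (Iio up)) (nhds (1 + (a - c * ρ * up) * t / 2)) ∧
    1 + (a - c * ρ * up) * t / 2 ≤ 0 ∧
    ∃ u ∈ Ioc (1 : ℝ) up, f u = 0 := by
  have hca : 0 < c * ρ - a := by linarith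
  -- part 1 : f 1 > 0
  set s : ℝ := (c * ρ - a) * t / 2 with hs
  have hs0 : 0 < s := by
    apply div_pos (mul_pos hca ht); norm_num
  have hp1 : p 1 = (c * ρ - a) ^ 2 := by rw [hp]; ring
  have hsq1 : Real.sqrt (p 1) = c * ρ - a := by rw [hp1, Real.sqrt_sq hca.le]
  have hf1pos : 0 < f 1 := by
    rw [hf, hsq1]
    have heq : Real.sqrt (p 1) = c * ρ - a := hsq1
    have hss : (c * ρ - a) * t / 2 = s := rfl
    rw [hss]
    have hsinh : sinhc s = Real.sinh s / s := by simp [sinhc, hs0.ne']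
    rw [hsinh]
    have key : (a - c * ρ * 1) * (t / 2) * (Real.sinh s / s) = - Real.sinh s := by
      rw [hs]; field_simp; ring
    rw [key]
    have : Real.cosh s + -Real.sinh s = Real.exp (-s) := by
      rw [← Real.cosh_sub_sinh]; ring
    rw [this]
    exact Real.exp_pos _
  -- continuity of f
  have hpc : Continuous p := by
    have : p = fun u => (a - ρ * c * u) ^ 2 + c ^ 2 * (u - u ^ 2) := funext hp
    rw [this]; continuity
  have hg : Continuous fun u => Real.sqrt (p u) * t / 2 :=
    ((Real.continuous_sqrt.comp hpc).mul continuous_const).div_const 2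
  have hfc : Continuous f := by
    have : f = fun u => Real.cosh (Real.sqrt (p u) * t / 2) +
        (a - c * ρ * u) * (t / 2) * sinhc (Real.sqrt (p u) * t / 2) := funext hf
    rw [this]
    exact (Real.continuous_cosh.comp hg).add
      ((((continuous_const.sub (continuous_const.mul continuous_id)).mul
        continuous_const)).mul (continuous_sinhc.comp hg))
  -- f up
  have hfup : f up = 1 + (a - c * ρ * up) * t / 2 := by
    rw [hf, hpup, Real.sqrt_zero]
    simp [sinhc]
    ring
  -- part 2 : limit
  have htend : Tendsto f (nhdsWithin up (Iio up)) (nhds (1 + (a - c * ρ * up) * t / 2)) := by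
    rw [← hfup]
    exact (hfc.tendsto up).mono_left nhdsWithin_le_nhds
  -- part 3
  have h2t : 2 ≤ t * (c * ρ * up - a) := (div_le_iff₀ hden).mp ht0
  have hle : 1 + (a - c * ρ * up) * t / 2 ≤ 0 := by nlinarith
  refine ⟨hf1pos, htend, hle, ?_⟩
  -- part 4 : IVT
  have hfuple : f up ≤ 0 := hfup ▸ hle
  have := intermediate_value_Ioc' hup.le hfc.continuousOn
    (show (0:ℝ) ∈ Ico (f up) (f 1) from ⟨hfuple, hf1pos⟩)
  obtain ⟨u, hu, hfu⟩ := this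
  exact ⟨u, hu, hfu⟩
end

section
/- Let $X$ be a real random variable whose moment generating function $M_X(u) = \mathbb{E}[e^{uX}]$ is finite on an open interval containing $0$. If $(r, s] \subseteq \{u : M_X(u) < \infty\}$ with $r < 0 < s$, and $h : (p,q) \to \mathbb{R}$ is real-analytic with $(r,s] \subseteq (p,q)$ and $M_X = h$ on $(r, s]$, then $M_X(u) = h(u) < \infty$ for all $u \in (p, q)$. Moreover, if $\lim_{u \nearrow q} h(u) = +\infty$, then $q = \sup\{u : M_X(u) < \infty\}$. -/
/-!
The mgf is analytic on the interior of the interval where it is finite, so by the identity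
theorem it agrees with `h` on the part of `(p, q)` lying in that interior. This part is also
closed in `(p, q)`: near a boundary point `x`, the Taylor series of `h` re-expanded at a nearby
interior point `v` is the Taylor series of the mgf at `v`, with radius bounded below through the
analyticity of `h` at `x`. The even-order Taylor coefficients of the mgf are integrals of
nonnegative functions, so summing them shows that `exp ((v ± t) * X)` is integrable throughout the
disc of convergence, which reaches past `x`. Hence `(p, q)` lies in the interior of the domain,
and if `h` blows up at `q`, the mgf cannot be finite beyond `q`, where it would be continuous.
-/

open MeasureTheory Set Filter ProbabilityTheory
open scoped ENNReal Topology Nat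

namespace MeasureTheory

theorem integrable_of_hasSum_of_summable_integral {α ι : Type*} [MeasurableSpace α]
    {μ : Measure α} [Countable ι] {F : ι → α → ℝ} {f : α → ℝ}
    (hF_int : ∀ i, Integrable (F i) μ) (hF_nonneg : ∀ i, 0 ≤ F i)
    (hF_sum : Summable fun i ↦ ∫ a, F i a ∂μ) (hf_meas : AEStronglyMeasurable f μ)
    (hf : ∀ a, HasSum (F · a) (f a)) :
    Integrable f μ := by
  refine ⟨hf_meas, ?_⟩
  rw [hasFiniteIntegral_iff_ofReal (ae_of_all _ fun a ↦ (hf a).nonneg fun i ↦ hF_nonneg i a)]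
  calc ∫⁻ a, ENNReal.ofReal (f a) ∂μ
      = ∫⁻ a, ∑' i, ENNReal.ofReal (F i a) ∂μ := by
        congr! with a
        rw [← (hf a).tsum_eq, ENNReal.ofReal_tsum_of_nonneg (hF_nonneg · a) (hf a).summable]
    _ = ∑' i, ENNReal.ofReal (∫ a, F i a ∂μ) := by
        rw [lintegral_tsum fun i ↦ (hF_int i).aemeasurable.ennreal_ofReal]
        exact tsum_congr fun i ↦
          (ofReal_integral_eq_lintegral_ofReal (hF_int i) (ae_of_all _ (hF_nonneg i))).symm
    _ < ∞ := by
        rw [← ENNReal.ofReal_tsum_of_nonneg (fun i ↦ integral_nonneg (hF_nonneg i)) hF_sum]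
        exact ENNReal.ofReal_lt_top

end MeasureTheory

namespace ProbabilityTheory

variable {Ω : Type*} [MeasurableSpace Ω] {μ : Measure Ω} {X : Ω → ℝ} {v x : ℝ}

theorem eball_radius_subset_integrableExpSet (hv : v ∈ interior (integrableExpSet X μ))
    {p : FormalMultilinearSeries ℝ ℝ ℝ} (hp : HasFPowerSeriesAt (mgf X μ) p v) :
    Metric.eball v p.radius ⊆ integrableExpSet X μ := by
  intro u hu
  obtain ⟨t, rfl⟩ : ∃ t, u = v + t := ⟨u - v, by ring⟩
  have ht : (‖t‖₊ : ℝ≥0∞) < p.radius := by simpa [edist_eq_enorm_sub, enorm_eq_nnnorm] using hu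
  have hX : AEMeasurable X μ := aemeasurable_of_mem_interior_integrableExpSet hv
  set c : ℕ → ℝ := fun n ↦ μ[fun ω ↦ X ω ^ n * Real.exp (v * X ω)] / (n ! : ℝ)
  have hp_eq : p = FormalMultilinearSeries.ofScalars ℝ c :=
    hp.eq_formalMultilinearSeries (hasFPowerSeriesAt_mgf hv)
  rw [hp_eq] at ht
  -- the even-order terms of the Taylor series are the integrals of the nonnegative
  -- Taylor terms of `cosh (t * X) * exp (v * X)`
  set F : ℕ → Ω → ℝ := fun k ω ↦ (t * X ω) ^ (2 * k) / (2 * k)! * Real.exp (v * X ω)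
  have hF_nonneg (k : ℕ) : 0 ≤ F k := fun ω ↦ by
    have := (even_two_mul k).pow_nonneg (t * X ω)
    positivity
  have hF_eq (k : ℕ) :
      F k = fun ω ↦ t ^ (2 * k) / (2 * k)! * (X ω ^ (2 * k) * Real.exp (v * X ω)) := by
    ext ω; simp only [F, mul_pow]; ring
  have hF_int (k : ℕ) : Integrable (F k) μ := by
    rw [hF_eq]
    exact (integrable_pow_mul_exp_of_mem_interior_integrableExpSet hv _).const_mul _
  have hF_sum : Summable fun k ↦ ∫ ω, F k ω ∂μ := by
    refine Summable.of_nonneg_of_le (fun k ↦ integral_nonneg (hF_nonneg k)) (fun k ↦ ?_)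
      (((FormalMultilinearSeries.ofScalars ℝ c).summable_norm_mul_pow ht).comp_injective
        (mul_right_injective₀ two_ne_zero))
    rw [hF_eq, integral_const_mul]
    simp only [Function.comp_apply, FormalMultilinearSeries.ofScalars_norm, coe_nnnorm,
      Real.norm_eq_abs, (even_two_mul k).pow_abs]
    calc t ^ (2 * k) / (2 * k)! * ∫ ω, X ω ^ (2 * k) * Real.exp (v * X ω) ∂μ
        = c (2 * k) * t ^ (2 * k) := by simp only [c]; ring
      _ ≤ |c (2 * k)| * t ^ (2 * k) :=
          mul_le_mul_of_nonneg_right (le_abs_self _) ((even_two_mul k).pow_nonneg t)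
  have hcosh : Integrable (fun ω ↦ Real.cosh (t * X ω) * Real.exp (v * X ω)) μ :=
    integrable_of_hasSum_of_summable_integral hF_int hF_nonneg hF_sum
      (((hX.const_mul t).cosh.mul (hX.const_mul v).exp).aestronglyMeasurable)
      fun ω ↦ (Real.hasSum_cosh (t * X ω)).mul_right _
  refine (hcosh.const_mul 2).mono' ((hX.const_mul _).exp.aestronglyMeasurable)
    (ae_of_all _ fun ω ↦ ?_)
  have : Real.exp (t * X ω) ≤ 2 * Real.cosh (t * X ω) := by
    rw [Real.cosh_eq]; linarith [Real.exp_pos (-(t * X ω))]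
  rw [Real.norm_of_nonneg (Real.exp_nonneg _), add_mul, Real.exp_add, mul_comm, ← mul_assoc]
  gcongr

theorem mem_interior_integrableExpSet_of_analyticAt {h : ℝ → ℝ}
    (hx : x ∈ closure (interior (integrableExpSet X μ))) (hh : AnalyticAt ℝ h x)
    (heq : mgf X μ =ᶠ[𝓝[interior (integrableExpSet X μ)] x] h) :
    x ∈ interior (integrableExpSet X μ) := by
  obtain ⟨P, R, hP⟩ := hh
  obtain ⟨U, hU_eq, hU_open, hxU⟩ := eventually_nhds_iff.1 (eventually_nhdsWithin_iff.1 heq)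
  obtain ⟨v, ⟨hvU, hvx⟩, hv⟩ := mem_closure_iff.1 hx (U ∩ Metric.eball x (R / 2))
    (hU_open.inter Metric.isOpen_eball)
    ⟨hxU, Metric.mem_eball_self (ENNReal.half_pos hP.r_pos.ne')⟩
  have hvx' : (‖v - x‖₊ : ℝ≥0∞) < R / 2 := by
    simpa [edist_eq_enorm_sub, enorm_eq_nnnorm] using hvx
  -- re-expand the series of `h` at the point `v`, where `h` coincides with the mgf
  have hPv := hP.changeOrigin (hvx'.trans_le ENNReal.half_le_self)
  rw [add_sub_cancel] at hPv
  have hmgf_eq : mgf X μ =ᶠ[𝓝 v] h :=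
    eventually_of_mem ((hU_open.inter isOpen_interior).mem_nhds ⟨hvU, hv⟩)
      fun w hw ↦ hU_eq w hw.1 hw.2
  have hball :=
    eball_radius_subset_integrableExpSet hv (hPv.hasFPowerSeriesAt.congr hmgf_eq.symm)
  refine interior_maximal ((Metric.eball_subset_eball hPv.r_le).trans hball)
    Metric.isOpen_eball ?_
  rw [Metric.mem_eball, edist_comm, edist_eq_enorm_sub, enorm_eq_nnnorm, lt_tsub_iff_right]
  calc (‖v - x‖₊ : ℝ≥0∞) + ‖v - x‖₊ < R / 2 + R / 2 := ENNReal.add_lt_add hvx' hvx'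
    _ = R := ENNReal.add_halves R

theorem subset_interior_integrableExpSet_of_analyticOnNhd {h : ℝ → ℝ} {s : Set ℝ} {z : ℝ}
    (hs : Convex ℝ s) (hs_open : IsOpen s) (hh : AnalyticOnNhd ℝ h s)
    (hz : z ∈ s ∩ interior (integrableExpSet X μ)) (heq : mgf X μ =ᶠ[𝓝 z] h) :
    s ⊆ interior (integrableExpSet X μ) ∧ EqOn (mgf X μ) h s := by
  have heqOn : EqOn (mgf X μ) h (s ∩ interior (integrableExpSet X μ)) :=
    (analyticOnNhd_mgf.mono inter_subset_right).eqOn_of_preconnected_of_eventuallyEq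
      (hh.mono inter_subset_left) (hs.inter convex_integrableExpSet.interior).isPreconnected
      hz heq
  have hsub : s ⊆ interior (integrableExpSet X μ) := by
    refine hs.isPreconnected.subset_of_closure_inter_subset isOpen_interior ⟨z, hz⟩ ?_
    rintro x ⟨hx_cl, hxs⟩
    refine mem_interior_integrableExpSet_of_analyticAt hx_cl (hh x hxs) ?_
    exact eventually_of_mem (inter_mem_nhdsWithin _ (hs_open.mem_nhds hxs))
      fun w hw ↦ heqOn ⟨hw.2, hw.1⟩
  exact ⟨hsub, fun x hx ↦ heqOn ⟨hx, hsub hx⟩⟩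

theorem csSup_integrableExpSet_eq_of_tendsto_atTop {a q : ℝ} (haq : a < q)
    (hsub : Ioo a q ⊆ integrableExpSet X μ) (htend : Tendsto (mgf X μ) (𝓝[<] q) atTop) :
    sSup (integrableExpSet X μ) = q := by
  have hq_ub : q ∈ upperBounds (integrableExpSet X μ) := by
    intro t ht
    by_contra! hqt
    have hb : (a + q) / 2 ∈ integrableExpSet X μ := hsub ⟨by linarith, by linarith⟩
    have hq : q ∈ interior (integrableExpSet X μ) :=
      interior_maximal (Ioo_subset_Icc_self.trans
        ((convex_iff_ordConnected.1 convex_integrableExpSet).out hb ht)) isOpen_Ioo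
        ⟨by linarith, hqt⟩
    exact not_tendsto_atTop_of_tendsto_nhds
      ((analyticAt_mgf hq).continuousAt.tendsto.mono_left nhdsWithin_le_nhds) htend
  exact ((isLUB_Ioo haq).of_subset_of_superset isLUB_Iic hsub fun _ ht ↦ hq_ub ht).csSup_eq
    ((nonempty_Ioo.2 haq).mono hsub)

end ProbabilityTheory

theorem stmt_15_general {Ω : Type*} [MeasurableSpace Ω] (μ : Measure Ω)
    (X : Ω → ℝ)
    (r s p q : ℝ) (hr : r < 0) (hs : 0 < s)
    (hrs : ∀ u ∈ Ioc r s, Integrable (fun ω => Real.exp (u * X ω)) μ)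
    (h : ℝ → ℝ) (hsub : Ioc r s ⊆ Ioo p q)
    (hanal : ∀ x ∈ Ioo p q, AnalyticAt ℝ h x)
    (hagree : ∀ u ∈ Ioc r s, mgf X μ u = h u) :
    (∀ u ∈ Ioo p q, Integrable (fun ω => Real.exp (u * X ω)) μ ∧ mgf X μ u = h u) ∧
    (Tendsto h (nhdsWithin q (Iio q)) atTop →
      q = sSup {u : ℝ | Integrable (fun ω => Real.exp (u * X ω)) μ}) := by
  have h0 : (0 : ℝ) ∈ Ioo r s := ⟨hr, hs⟩
  have h0_int : (0 : ℝ) ∈ interior (integrableExpSet X μ) :=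
    interior_maximal (fun u hu ↦ hrs u (Ioo_subset_Ioc_self hu)) isOpen_Ioo h0
  have h_eq : mgf X μ =ᶠ[𝓝 0] h :=
    eventually_of_mem (isOpen_Ioo.mem_nhds h0) fun u hu ↦ hagree u (Ioo_subset_Ioc_self hu)
  have h0_pq : (0 : ℝ) ∈ Ioo p q := hsub (Ioo_subset_Ioc_self h0)
  obtain ⟨hpq_int, hpq_eq⟩ := subset_interior_integrableExpSet_of_analyticOnNhd
    (convex_Ioo p q) isOpen_Ioo hanal ⟨h0_pq, h0_int⟩ h_eq
  refine ⟨fun u hu ↦ ⟨interior_subset (s := integrableExpSet X μ) (hpq_int hu), hpq_eq hu⟩,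
    fun htend ↦ ?_⟩
  have hpq : p < q := h0_pq.1.trans h0_pq.2
  refine (csSup_integrableExpSet_eq_of_tendsto_atTop hpq (hpq_int.trans interior_subset)
    (htend.congr' ?_)).symm
  exact eventually_of_mem (Ioo_mem_nhdsLT hpq) fun u hu ↦ (hpq_eq hu).symm

/-- Analytic continuation of the moment generating function: if `M_X` is finite
on a neighborhood of `0`, finite on `(r,s]` with `r < 0 < s`, and agrees on
`(r,s]` with a function `h` real-analytic on `(p,q) ⊇ (r,s]`, then `M_X` is
finite and equals `h` on all of `(p,q)`; moreover if `h(u) → ∞` as `u ↗ q`,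
then `q` is the right abscissa of convergence of `M_X`. -/
theorem stmt_15 {Ω : Type*} [MeasurableSpace Ω] (μ : Measure Ω) [IsProbabilityMeasure μ]
    (X : Ω → ℝ) (hX : Measurable X)
    (hnbhd : ∃ ε > 0, ∀ u : ℝ, |u| < ε → Integrable (fun ω => Real.exp (u * X ω)) μ)
    (r s p q : ℝ) (hr : r < 0) (hs : 0 < s)
    (hrs : ∀ u ∈ Ioc r s, Integrable (fun ω => Real.exp (u * X ω)) μ)
    (h : ℝ → ℝ) (hsub : Ioc r s ⊆ Ioo p q)
    (hanal : ∀ x ∈ Ioo p q, AnalyticAt ℝ h x)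
    (hagree : ∀ u ∈ Ioc r s, mgf X μ u = h u) :
    (∀ u ∈ Ioo p q, Integrable (fun ω => Real.exp (u * X ω)) μ ∧ mgf X μ u = h u) ∧
    (Tendsto h (nhdsWithin q (Iio q)) atTop →
      q = sSup {u : ℝ | Integrable (fun ω => Real.exp (u * X ω)) μ}) :=
  stmt_15_general μ X r s p q hr hs hrs h hsub hanal hagree
end

section
/- Let $X$ be a nonnegative real random variable and suppose the right abscissa of convergence $\beta = \sup\{u \in \mathbb{R} : \mathbb{E}[e^{uX}] < \infty\}$ is finite with $\beta > 0$. Then $M_X(u) = \mathbb{E}[e^{uX}]$ has a singularity at $\beta$: there is no real-analytic function on an open interval containing $\beta$ that agrees with $M_X$ on $(\beta - \epsilon, \beta)$ for some $\epsilon > 0$ and is the restriction of an analytic extension of $M_X$. -/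
/-!
Pringsheim's argument. Fix `u < β` close to `β`. Since `u` is interior to the convergence
interval, `M_X` is analytic at `u` with Taylor coefficients `E[X ^ n * exp (u X)] / n!`, which
are nonnegative because `X ≥ 0`. An analytic continuation `g` of `M_X` through `β` forces this
Taylor series to converge beyond `β`, at some `u + t` with `t > β - u`. Nonnegativity lets us
sum the series under the expectation (monotone convergence), which gives `E[exp ((u + t) X)] < ∞`
and contradicts the definition of `β`.
-/

open MeasureTheory Set ProbabilityTheory Filter
open scoped Nat ENNReal NNReal Topology

theorem HasFPowerSeriesOnBall.sub_edist_le_radius_of_hasFPowerSeriesAt {𝕜 E : Type*}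
    [NontriviallyNormedField 𝕜] [NormedAddCommGroup E] [NormedSpace 𝕜 E] [CompleteSpace E]
    {f : 𝕜 → E} {p q : FormalMultilinearSeries 𝕜 𝕜 E} {x y : 𝕜} {r : ℝ≥0∞}
    (hf : HasFPowerSeriesOnBall f p x r) (hy : edist y x < r) (hq : HasFPowerSeriesAt f q y) :
    r - edist y x ≤ q.radius := by
  have hshift := hf.changeOrigin (y := y - x) (by rwa [edist_eq_enorm_sub, enorm_eq_nnnorm] at hy)
  rw [add_sub_cancel] at hshift
  rw [hq.eq_formalMultilinearSeries hshift.hasFPowerSeriesAt, edist_eq_enorm_sub]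
  exact hshift.r_le

theorem Real.hasSum_exp_add_mul (x u t : ℝ) :
    HasSum (fun n : ℕ => x ^ n * Real.exp (u * x) / n ! * t ^ n) (Real.exp ((u + t) * x)) := by
  have h := (NormedSpace.expSeries_div_hasSum_exp (t * x)).mul_right (Real.exp (u * x))
  rw [← Real.exp_eq_exp_ℝ, ← Real.exp_add] at h
  have hterm : (fun n : ℕ => x ^ n * Real.exp (u * x) / n ! * t ^ n)
      = fun n => (t * x) ^ n / n ! * Real.exp (u * x) := by
    funext n
    rw [mul_pow]
    ring
  rw [hterm, show (u + t) * x = t * x + u * x by ring]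
  exact h

namespace ProbabilityTheory

variable {Ω : Type*} [MeasurableSpace Ω] {μ : Measure Ω} {X : Ω → ℝ}

lemma Ioo_zero_sSup_subset_interior_integrableExpSet [IsFiniteMeasure μ] :
    Ioo 0 (sSup (integrableExpSet X μ)) ⊆ interior (integrableExpSet X μ) := by
  rintro u ⟨hu₀, hu⟩
  obtain ⟨s, hs, hus⟩ := exists_lt_of_lt_csSup ⟨0, by simp [integrableExpSet]⟩ hu
  refine mem_interior_iff_mem_nhds.2 (mem_of_superset (Ioo_mem_nhds hu₀ hus) fun t ht => ?_)
  exact integrable_exp_mul_of_nonneg_of_le hs ht.1.le ht.2.le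

lemma integrable_exp_add_mul_of_summable (hXm : AEMeasurable X μ) (hX : ∀ ω, 0 ≤ X ω) {u t : ℝ}
    (ht : 0 ≤ t) (hint : ∀ n : ℕ, Integrable (fun ω => X ω ^ n * Real.exp (u * X ω)) μ)
    (hsum : Summable fun n : ℕ => μ[fun ω => X ω ^ n * Real.exp (u * X ω)] / n ! * t ^ n) :
    Integrable (fun ω => Real.exp ((u + t) * X ω)) μ := by
  set F : ℕ → Ω → ℝ := fun n ω => X ω ^ n * Real.exp (u * X ω) / n ! * t ^ n
  have hF_nonneg : ∀ n ω, 0 ≤ F n ω := fun n ω => by have := hX ω; positivity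
  have hF_int : ∀ n, Integrable (F n) μ := fun n => ((hint n).div_const _).mul_const _
  have hF_integral : ∀ n, ∫ ω, F n ω ∂μ = μ[fun ω => X ω ^ n * Real.exp (u * X ω)] / n ! * t ^ n :=
    fun n => by rw [integral_mul_const, integral_div]
  refine ⟨(Real.measurable_exp.comp_aemeasurable (hXm.const_mul _)).aestronglyMeasurable, ?_⟩
  rw [hasFiniteIntegral_iff_ofReal (ae_of_all _ fun ω => (Real.exp_pos _).le)]
  calc ∫⁻ ω, ENNReal.ofReal (Real.exp ((u + t) * X ω)) ∂μ
      = ∫⁻ ω, ∑' n, ENNReal.ofReal (F n ω) ∂μ := by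
        refine lintegral_congr fun ω => ?_
        rw [← ENNReal.ofReal_tsum_of_nonneg (hF_nonneg · ω)
          (Real.hasSum_exp_add_mul (X ω) u t).summable, (Real.hasSum_exp_add_mul (X ω) u t).tsum_eq]
    _ = ∑' n, ENNReal.ofReal (∫ ω, F n ω ∂μ) := by
        rw [lintegral_tsum fun n => (hF_int n).aemeasurable.ennreal_ofReal]
        exact tsum_congr fun n =>
          (ofReal_integral_eq_lintegral_ofReal (hF_int n) (ae_of_all _ (hF_nonneg n))).symm
    _ = ENNReal.ofReal (∑' n, ∫ ω, F n ω ∂μ) := by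
        refine (ENNReal.ofReal_tsum_of_nonneg (fun n => integral_nonneg (hF_nonneg n)) ?_).symm
        simpa only [hF_integral] using hsum
    _ < ⊤ := ENNReal.ofReal_lt_top

lemma add_mem_integrableExpSet_of_lt_radius (hX : ∀ ω, 0 ≤ X ω) {u t : ℝ}
    (hu : u ∈ interior (integrableExpSet X μ)) (ht : 0 ≤ t)
    (hrad : ENNReal.ofReal t < (FormalMultilinearSeries.ofScalars ℝ
      fun n => μ[fun ω => X ω ^ n * Real.exp (u * X ω)] / n !).radius) :
    u + t ∈ integrableExpSet X μ := by
  refine integrable_exp_add_mul_of_summable (aemeasurable_of_mem_interior_integrableExpSet hu) hX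
    ht (integrable_pow_mul_exp_of_mem_interior_integrableExpSet hu) ?_
  refine (FormalMultilinearSeries.summable_norm_mul_pow _ hrad).congr fun n => ?_
  have hmoment : 0 ≤ μ[fun ω => X ω ^ n * Real.exp (u * X ω)] :=
    integral_nonneg fun ω => by have := hX ω; positivity
  rw [FormalMultilinearSeries.ofScalars_norm, Real.norm_of_nonneg (by positivity),
    Real.coe_toNNReal _ ht]

end ProbabilityTheory

theorem stmt_16_general {Ω : Type*} [MeasurableSpace Ω] (μ : Measure Ω) [IsProbabilityMeasure μ]
    (X : Ω → ℝ) (hXpos : ∀ ω, 0 ≤ X ω)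
    (β : ℝ) (hβpos : 0 < β)
    (hbdd : BddAbove {u : ℝ | Integrable (fun ω => Real.exp (u * X ω)) μ})
    (hβ : β = sSup {u : ℝ | Integrable (fun ω => Real.exp (u * X ω)) μ}) :
    ¬ ∃ (g : ℝ → ℝ) (δ : ℝ), 0 < δ ∧
      (∀ x ∈ Ioo (β - δ) (β + δ), AnalyticAt ℝ g x) ∧
      ∃ ε > 0, ∀ u ∈ Ioo (β - ε) β, g u = mgf X μ u := by
  rintro ⟨g, δ, hδ, hg, ε, hε, hgM⟩
  obtain ⟨p, r, hp⟩ := hg β ⟨by linarith, by linarith⟩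
  obtain ⟨ρ, hρ, hρβ, hρε, hρr⟩ :
      ∃ ρ : ℝ, 0 < ρ ∧ ρ < β ∧ ρ < ε ∧ ENNReal.ofReal (3 * ρ) < r := by
    have h3ρ : Tendsto (fun ρ : ℝ => ENNReal.ofReal (3 * ρ)) (𝓝 0) (𝓝 0) := by
      simpa using ENNReal.tendsto_ofReal ((continuous_const_mul (3 : ℝ)).tendsto 0)
    exact ((eventually_mem_nhdsWithin (s := Ioi 0) (a := 0)).and (((eventually_lt_nhds hβpos).and
      ((eventually_lt_nhds hε).and (h3ρ.eventually (gt_mem_nhds hp.r_pos)))).filter_mono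
      nhdsWithin_le_nhds)).exists
  have hu : β - ρ ∈ interior (integrableExpSet X μ) :=
    Ioo_zero_sSup_subset_interior_integrableExpSet (hβ ▸ ⟨by linarith, by linarith⟩)
  have hMg : mgf X μ =ᶠ[𝓝 (β - ρ)] g :=
    eventually_of_mem (Ioo_mem_nhds (by linarith) (by linarith)) fun u hu => (hgM u hu).symm
  have hdist : edist (β - ρ) β = ENNReal.ofReal ρ := by
    rw [edist_dist, Real.dist_eq, sub_sub_cancel_left, abs_neg, abs_of_pos hρ]
  have hρr' : ENNReal.ofReal (2 * ρ) + edist (β - ρ) β < r := by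
    rwa [hdist, ← ENNReal.ofReal_add (by linarith) hρ.le, show 2 * ρ + ρ = 3 * ρ by ring]
  have hrad := hp.sub_edist_le_radius_of_hasFPowerSeriesAt (le_add_self.trans_lt hρr')
    ((hasFPowerSeriesAt_mgf hu).congr hMg)
  have hmem := add_mem_integrableExpSet_of_lt_radius hXpos hu (t := 2 * ρ) (by linarith)
    ((lt_tsub_iff_right.2 hρr').trans_le hrad)
  have := le_csSup hbdd hmem
  linarith

/-- Landau–Pringsheim for Laplace transforms of nonnegative random variables:
if the right abscissa of convergence `β` of the moment generating function is
finite and positive, then `β` is a singular point: no function real-analytic on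
a neighborhood of `β` agrees with `M_X` on a left neighborhood `(β-ε, β)`. -/
theorem stmt_16 {Ω : Type*} [MeasurableSpace Ω] (μ : Measure Ω) [IsProbabilityMeasure μ]
    (X : Ω → ℝ) (hX : Measurable X) (hXpos : ∀ ω, 0 ≤ X ω)
    (β : ℝ) (hβpos : 0 < β)
    (hbdd : BddAbove {u : ℝ | Integrable (fun ω => Real.exp (u * X ω)) μ})
    (hβ : β = sSup {u : ℝ | Integrable (fun ω => Real.exp (u * X ω)) μ}) :
    ¬ ∃ (g : ℝ → ℝ) (δ : ℝ), 0 < δ ∧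
      (∀ x ∈ Ioo (β - δ) (β + δ), AnalyticAt ℝ g x) ∧
      ∃ ε > 0, ∀ u ∈ Ioo (β - ε) β, g u = mgf X μ u :=
  stmt_16_general μ X hXpos β hβpos hbdd hβ
end
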